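/- arXiv:2308.03614 — 3 statements merged into one kernel-verified Lean document; each statement's English description precedes it below -/
import Mathlib

section
/- If $0 \le B < 1$, then $\lim_{n\to\infty} \dfrac{E\,|C \cap [1,n]|}{(1-B)\log n} = 1$, where $|C\cap[1,n]|$ denotes the number of indices $1 \le i \le n$ with $Z_i = a$. -/
open MeasureTheory Filter Finset Topology

noncomputable section

/-- `m_k = q_k / p_k` where `q_k = 1 - p_k`. -/
def mSeq (p : ℕ → ℝ) (k : ℕ) : ℝ := (1 - p k) / p k

/-- `D(k,n) = 1 + ∑_{j=k}^n m_j m_{j+1} ⋯ m_n`. -/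
def Dkn (m : ℕ → ℝ) (k n : ℕ) : ℝ :=
  1 + ∑ j ∈ Finset.Icc k n, ∏ i ∈ Finset.Icc j n, m i

/-- `D(n) = D(1,n)`. -/
def Dn (m : ℕ → ℝ) (n : ℕ) : ℝ := Dkn m 1 n

/-- The one-step transition probability `P(Z_n = j ∣ Z_{n-1} = z)
= C(z+j, j) p_n^{1+z} q_n^j`. -/
def transProb (p : ℕ → ℝ) (n z j : ℕ) : ℝ :=
  ((z + j).choose j : ℝ) * p n ^ (1 + z) * (1 - p n) ^ j

/-- `Z` is a Markov chain with `Z_0 = 0` and one-step transitions `transProb p`,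
i.e. a branching process with geometric offspring distributions in the varying
environment `p`, with one immigrant in each generation.  This is expressed by
prescribing all finite-dimensional distributions. -/
def IsBPVEI {Ω : Type*} [MeasurableSpace Ω] (P : Measure Ω)
    (p : ℕ → ℝ) (Z : ℕ → Ω → ℕ) : Prop :=
  (∀ n, Measurable (Z n)) ∧
  ∀ (n : ℕ) (z : ℕ → ℕ),
    (P {ω | ∀ i ≤ n, Z i ω = z i}).toReal =
      (if z 0 = 0 then (1 : ℝ) else 0) *
        ∏ i ∈ Finset.Icc 1 n, transProb p i (z (i - 1)) (z i)

/-- The specific environment: `p_i = 1/2 - B/(4i)` for `i > i0`, `p_i = 1/2` for `i ≤ i0`. -/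
def pB (B : ℝ) (i0 : ℕ) (i : ℕ) : ℝ := if i ≤ i0 then 1 / 2 else 1 / 2 - B / (4 * i)

/-- environment conditions -/
def GoodEnv (p : ℕ → ℝ) : Prop := ∀ i, 1 ≤ i → 0 < p i ∧ p i ≤ 1 / 2

def thetaSeq (p : ℕ → ℝ) : ℕ → ℝ
  | 0 => 0
  | n + 1 => (1 - p (n + 1)) / (1 - thetaSeq p n * p (n + 1))

def uSeq (p : ℕ → ℝ) : ℕ → ℝ
  | 0 => 1
  | n + 1 => mSeq p (n + 1) * uSeq p n + 1

lemma thetaSeq_bounds {p : ℕ → ℝ} (hp : GoodEnv p) (n : ℕ) :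
    0 ≤ thetaSeq p n ∧ thetaSeq p n < 1 := by
  induction n with
  | zero => norm_num [thetaSeq]
  | succ n ih =>
    obtain ⟨h0, h1⟩ := ih
    obtain ⟨hp0, hp1⟩ := hp (n + 1) (by omega)
    have hd : 0 < 1 - thetaSeq p n * p (n + 1) := by nlinarith
    rw [thetaSeq]
    constructor
    · apply div_nonneg (by linarith) (by linarith)
    · rw [div_lt_one hd]; nlinarith

lemma uSeq_mul_one_sub_theta {p : ℕ → ℝ} (hp : GoodEnv p) (n : ℕ) :
    uSeq p n * (1 - thetaSeq p n) = 1 := by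
  induction n with
  | zero => norm_num [uSeq, thetaSeq]
  | succ n ih =>
    obtain ⟨h0, h1⟩ := thetaSeq_bounds hp n
    obtain ⟨hp0, hp1⟩ := hp (n + 1) (by omega)
    have hd : 0 < 1 - thetaSeq p n * p (n + 1) := by nlinarith
    rw [uSeq, thetaSeq, mSeq]
    have hd' : 1 - p (n + 1) * thetaSeq p n ≠ 0 := by nlinarith
    field_simp
    linear_combination (p (n + 1) * (1 - p (n + 1))) * ih

lemma key_hasSum (a : ℕ) {t P : ℝ} (ht0 : 0 ≤ t) (ht1 : t < 1) (hP0 : 0 < P) (hP1 : P < 1) :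
    HasSum (fun b : ℕ => ((1 - t) * t ^ b) * (((b + a).choose a : ℝ) * P ^ (1 + b) * (1 - P) ^ a))
      ((1 - (1 - P) / (1 - t * P)) * ((1 - P) / (1 - t * P)) ^ a) := by
  have htP : t * P < 1 := by nlinarith
  have hd : (0:ℝ) < 1 - t * P := by linarith
  have hnorm : ‖t * P‖ < 1 := by
    rw [Real.norm_eq_abs, abs_of_nonneg (by positivity)]; exact htP
  have H := hasSum_choose_mul_geometric_of_norm_lt_one a hnorm
  have H2 := H.mul_left ((1 - t) * P * (1 - P) ^ a)
  have hval : (1 - t) * P * (1 - P) ^ a * (1 / (1 - t * P) ^ (a + 1)) =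
      (1 - (1 - P) / (1 - t * P)) * ((1 - P) / (1 - t * P)) ^ a := by
    have h1 : 1 - (1 - P) / (1 - t * P) = P * (1 - t) / (1 - t * P) := by
      rw [eq_div_iff hd.ne', sub_mul, div_mul_cancel₀ _ hd.ne']
      ring
    rw [h1, div_pow]
    field_simp
    ring
  rw [← hval]
  have hfun : (fun b : ℕ => ((1 - t) * t ^ b) *
      (((b + a).choose a : ℝ) * P ^ (1 + b) * (1 - P) ^ a)) =
      fun b : ℕ => (1 - t) * P * (1 - P) ^ a * (((b + a).choose a : ℝ) * (t * P) ^ b) := by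
    funext b
    simp only [pow_add, mul_pow, pow_one]
    ring
  rw [hfun]
  exact H2

def extendFin (n : ℕ) (v : Fin (n + 1) → ℕ) (k : ℕ) : ℕ :=
  if h : k < n + 1 then v ⟨k, h⟩ else 0

def Wpath (p : ℕ → ℝ) (n : ℕ) (v : Fin (n + 1) → ℕ) : ℝ :=
  (if extendFin n v 0 = 0 then (1 : ℝ) else 0) *
    ∏ i ∈ Finset.Icc 1 n, transProb p i (extendFin n v (i - 1)) (extendFin n v i)

lemma extendFin_lt (n : ℕ) (v : Fin (n + 1) → ℕ) {k : ℕ} (h : k < n + 1) :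
    extendFin n v k = v ⟨k, h⟩ := dif_pos h

lemma transProb_nonneg {p : ℕ → ℝ} (hp : GoodEnv p) {i : ℕ} (hi : 1 ≤ i) (z j : ℕ) :
    0 ≤ transProb p i z j := by
  obtain ⟨h0, h1⟩ := hp i hi
  have : (0:ℝ) ≤ 1 - p i := by linarith
  unfold transProb
  positivity

lemma Wpath_nonneg {p : ℕ → ℝ} (hp : GoodEnv p) (n : ℕ) (v : Fin (n + 1) → ℕ) :
    0 ≤ Wpath p n v := by
  apply mul_nonneg
  · split_ifs <;> norm_num
  · exact Finset.prod_nonneg fun i hi =>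
      transProb_nonneg hp (Finset.mem_Icc.mp hi).1 _ _

lemma extendFin_snoc_le (n : ℕ) (w : Fin (n + 1) → ℕ) (x : ℕ) {k : ℕ} (hk : k ≤ n) :
    extendFin (n + 1) (Fin.snoc w x) k = extendFin n w k := by
  rw [extendFin_lt _ _ (by omega : k < n + 2), extendFin_lt _ _ (by omega : k < n + 1)]
  have h : (⟨k, by omega⟩ : Fin (n + 2)) = Fin.castSucc ⟨k, by omega⟩ := rfl
  rw [h, Fin.snoc_castSucc]

lemma extendFin_snoc_top (n : ℕ) (w : Fin (n + 1) → ℕ) (x : ℕ) :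
    extendFin (n + 1) (Fin.snoc w x) (n + 1) = x := by
  rw [extendFin_lt _ _ (by omega : n + 1 < n + 2)]
  have h : (⟨n + 1, by omega⟩ : Fin (n + 2)) = Fin.last (n + 1) := rfl
  rw [h, Fin.snoc_last]

lemma extendFin_fin (n : ℕ) (v : Fin (n + 1) → ℕ) (k : Fin (n + 1)) :
    extendFin n v k.1 = v k := by
  rw [extendFin_lt _ _ k.isLt]

lemma Wpath_snoc (p : ℕ → ℝ) (n : ℕ) (w : Fin (n + 1) → ℕ) (x : ℕ) :
    Wpath p (n + 1) (Fin.snoc w x) =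
      Wpath p n w * transProb p (n + 1) (w (Fin.last n)) x := by
  unfold Wpath
  rw [Finset.prod_Icc_succ_top (by omega : 1 ≤ n + 1)]
  rw [extendFin_snoc_le n w x (by omega : 0 ≤ n)]
  have h1 : extendFin (n + 1) (Fin.snoc w x) (n + 1 - 1) = w (Fin.last n) := by
    rw [show n + 1 - 1 = n from rfl, extendFin_snoc_le n w x (le_refl n)]
    exact extendFin_fin n w (Fin.last n)
  have h2 : extendFin (n + 1) (Fin.snoc w x) (n + 1) = x := extendFin_snoc_top n w x
  rw [h1, h2]
  have h3 : ∀ i ∈ Finset.Icc 1 n,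
      transProb p i (extendFin (n + 1) (Fin.snoc w x) (i - 1))
          (extendFin (n + 1) (Fin.snoc w x) i) =
        transProb p i (extendFin n w (i - 1)) (extendFin n w i) := by
    intro i hi
    obtain ⟨hi1, hi2⟩ := Finset.mem_Icc.mp hi
    rw [extendFin_snoc_le n w x (by omega : i - 1 ≤ n), extendFin_snoc_le n w x hi2]
  rw [Finset.prod_congr rfl h3]
  ring

lemma tsum_Wpath (p : ℕ → ℝ) (hp : GoodEnv p) :
    ∀ n a : ℕ, ∑' v : {v : Fin (n + 1) → ℕ // v (Fin.last n) = a},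
        ENNReal.ofReal (Wpath p n v.1) =
      ENNReal.ofReal ((1 - thetaSeq p n) * thetaSeq p n ^ a) := by
  intro n
  induction n with
  | zero =>
    intro a
    rw [tsum_eq_single (⟨fun _ => a, rfl⟩ : {v : Fin 1 → ℕ // v (Fin.last 0) = a})
      (fun b hb => (hb (Subtype.ext (funext fun i => by
        rw [Subsingleton.elim i (Fin.last 0)]; exact b.2))).elim)]
    have h1 : Wpath p 0 (fun _ => a) = if a = 0 then 1 else 0 := by
      unfold Wpath
      rw [show Finset.Icc 1 0 = ∅ from rfl, Finset.prod_empty, mul_one]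
      rfl
    rw [h1, thetaSeq]
    rcases a with _ | a
    · norm_num
    · norm_num [pow_succ]
  | succ n ih =>
    intro a
    obtain ⟨ht0, ht1⟩ := thetaSeq_bounds hp n
    obtain ⟨hp0, hp1⟩ := hp (n + 1) (by omega)
    let e : (Fin (n + 1) → ℕ) ≃ {v : Fin (n + 2) → ℕ // v (Fin.last (n + 1)) = a} :=
      { toFun := fun w => ⟨Fin.snoc w a, Fin.snoc_last ..⟩
        invFun := fun v => Fin.init v.1
        left_inv := fun w => Fin.init_snoc ..
        right_inv := fun v => Subtype.ext (by
          show Fin.snoc (Fin.init v.1) a = v.1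
          have h := Fin.snoc_init_self v.1
          rwa [v.2] at h) }
    rw [← e.tsum_eq]
    have step1 : ∑' w : Fin (n + 1) → ℕ, ENNReal.ofReal (Wpath p (n + 1) ((e w).1)) =
        ∑' w : Fin (n + 1) → ℕ, ENNReal.ofReal (Wpath p n w) *
          ENNReal.ofReal (transProb p (n + 1) (w (Fin.last n)) a) := by
      refine tsum_congr fun w => ?_
      have : (e w).1 = Fin.snoc w a := rfl
      rw [this, Wpath_snoc, ENNReal.ofReal_mul (Wpath_nonneg hp n w)]
    rw [step1]
    rw [← (Equiv.sigmaFiberEquiv (fun w : Fin (n + 1) → ℕ => w (Fin.last n))).tsum_eq]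
    rw [ENNReal.tsum_sigma']
    have step2 : ∀ b : ℕ,
        (∑' w : {w : Fin (n + 1) → ℕ // w (Fin.last n) = b},
          ENNReal.ofReal (Wpath p n w.1) *
            ENNReal.ofReal (transProb p (n + 1) (w.1 (Fin.last n)) a)) =
        ENNReal.ofReal ((1 - thetaSeq p n) * thetaSeq p n ^ b) *
          ENNReal.ofReal (transProb p (n + 1) b a) := by
      intro b
      rw [← ih b, ← ENNReal.tsum_mul_right]
      exact tsum_congr fun w => by rw [w.2]
    refine Eq.trans (tsum_congr fun b =>
      Eq.trans (tsum_congr fun w => rfl) (step2 b)) ?_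
    have htheta : thetaSeq p (n + 1) =
        (1 - p (n + 1)) / (1 - thetaSeq p n * p (n + 1)) := by rw [thetaSeq]
    have hkey : HasSum (fun b : ℕ => ((1 - thetaSeq p n) * thetaSeq p n ^ b) *
          transProb p (n + 1) b a)
        ((1 - thetaSeq p (n + 1)) * thetaSeq p (n + 1) ^ a) := by
      rw [htheta]
      exact key_hasSum a ht0 ht1 hp0 (lt_of_le_of_lt hp1 (by norm_num))
    have hnn : ∀ b : ℕ, 0 ≤ ((1 - thetaSeq p n) * thetaSeq p n ^ b) *
        transProb p (n + 1) b a := by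
      intro b
      apply mul_nonneg (mul_nonneg (by linarith) (by positivity))
      exact transProb_nonneg hp (by omega) b a
    calc ∑' b : ℕ, ENNReal.ofReal ((1 - thetaSeq p n) * thetaSeq p n ^ b) *
          ENNReal.ofReal (transProb p (n + 1) b a)
        = ∑' b : ℕ, ENNReal.ofReal (((1 - thetaSeq p n) * thetaSeq p n ^ b) *
            transProb p (n + 1) b a) := by
          refine tsum_congr fun b => ?_
          rw [ENNReal.ofReal_mul (mul_nonneg (by linarith) (by positivity))]
      _ = ENNReal.ofReal (∑' b : ℕ, ((1 - thetaSeq p n) * thetaSeq p n ^ b) *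
            transProb p (n + 1) b a) := by
          rw [ENNReal.ofReal_tsum_of_nonneg hnn hkey.summable]
      _ = ENNReal.ofReal ((1 - thetaSeq p (n + 1)) * thetaSeq p (n + 1) ^ a) := by
          rw [hkey.tsum_eq]

section Measure

variable {Ω : Type*} [MeasurableSpace Ω] (μ : Measure Ω) [IsProbabilityMeasure μ]
  (p : ℕ → ℝ) (Z : ℕ → Ω → ℕ)

lemma cyl_measurable (hZ : ∀ n, Measurable (Z n)) (n : ℕ) (z : ℕ → ℕ) :
    MeasurableSet {ω | ∀ i ≤ n, Z i ω = z i} := by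
  have : {ω | ∀ i ≤ n, Z i ω = z i} = ⋂ i, ⋂ (_ : i ≤ n), (Z i) ⁻¹' {z i} := by
    ext ω; simp [Set.mem_iInter]
  rw [this]
  exact MeasurableSet.iInter fun i => MeasurableSet.iInter fun _ =>
    (hZ i) (measurableSet_singleton _)

lemma marginal_eq (hZ : IsBPVEI μ p Z) (hp : GoodEnv p) (n a : ℕ) :
    (μ {ω | Z n ω = a}).toReal = (1 - thetaSeq p n) * thetaSeq p n ^ a := by
  have hdecomp : {ω | Z n ω = a} =
      ⋃ v : {v : Fin (n + 1) → ℕ // v (Fin.last n) = a},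
        {ω | ∀ i ≤ n, Z i ω = extendFin n v.1 i} := by
    ext ω
    simp only [Set.mem_setOf_eq, Set.mem_iUnion]
    constructor
    · intro h
      refine ⟨⟨fun i => Z i.1 ω, h⟩, fun i hi => ?_⟩
      rw [extendFin_lt _ _ (by omega : i < n + 1)]
    · rintro ⟨v, hv⟩
      have := hv n le_rfl
      rw [extendFin_lt _ _ (by omega : n < n + 1)] at this
      rw [this]
      exact v.2
  have hdisj : Pairwise (Function.onFun Disjoint
      fun v : {v : Fin (n + 1) → ℕ // v (Fin.last n) = a} =>
        {ω | ∀ i ≤ n, Z i ω = extendFin n v.1 i}) := by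
    intro v w hvw
    rw [Function.onFun, Set.disjoint_left]
    intro ω h1 h2
    apply hvw
    apply Subtype.ext
    funext i
    have e1 := h1 i.1 (by omega : i.1 ≤ n)
    have e2 := h2 i.1 (by omega : i.1 ≤ n)
    rw [extendFin_fin] at e1 e2
    rw [← e1, ← e2]
  have hmeas : ∀ v : {v : Fin (n + 1) → ℕ // v (Fin.last n) = a},
      MeasurableSet {ω | ∀ i ≤ n, Z i ω = extendFin n v.1 i} :=
    fun v => cyl_measurable Z hZ.1 n _
  have hU : μ {ω | Z n ω = a} =
      ∑' v : {v : Fin (n + 1) → ℕ // v (Fin.last n) = a},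
        μ {ω | ∀ i ≤ n, Z i ω = extendFin n v.1 i} := by
    rw [hdecomp, measure_iUnion hdisj hmeas]
  have hcyl : ∀ v : {v : Fin (n + 1) → ℕ // v (Fin.last n) = a},
      μ {ω | ∀ i ≤ n, Z i ω = extendFin n v.1 i} = ENNReal.ofReal (Wpath p n v.1) := by
    intro v
    have h1 := hZ.2 n (extendFin n v.1)
    have h2 : μ {ω | ∀ i ≤ n, Z i ω = extendFin n v.1 i} ≠ ⊤ := measure_ne_top μ _
    rw [← ENNReal.ofReal_toReal h2, h1]
    rfl
  rw [hU]
  rw [tsum_congr hcyl, tsum_Wpath p hp n a]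
  rw [ENNReal.toReal_ofReal]
  obtain ⟨h0, h1⟩ := thetaSeq_bounds hp n
  exact mul_nonneg (by linarith) (by positivity)

end Measure

lemma tendsto_log_natCast_atTop : Tendsto (fun n : ℕ => Real.log n) atTop atTop :=
  Real.tendsto_log_atTop.comp tendsto_natCast_atTop_atTop

lemma tendsto_harmonic_div_log :
    Tendsto (fun n : ℕ => (∑ i ∈ Finset.range n, ((i : ℝ) + 1)⁻¹) / Real.log n)
      atTop (𝓝 1) := by
  have hT : ∀ n : ℕ, (∑ i ∈ Finset.range n, ((i : ℝ) + 1)⁻¹) = ((harmonic n : ℚ) : ℝ) := by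
    intro n
    rw [harmonic]
    push_cast
    rfl
  have hup : Tendsto (fun n : ℕ => (Real.log n)⁻¹ + 1) atTop (𝓝 1) := by
    have h1 : Tendsto (fun n : ℕ => (Real.log n)⁻¹) atTop (𝓝 0) :=
      tendsto_log_natCast_atTop.inv_tendsto_atTop
    simpa using h1.add tendsto_const_nhds
  refine tendsto_of_tendsto_of_tendsto_of_le_of_le' tendsto_const_nhds hup ?_ ?_
  · filter_upwards [eventually_ge_atTop 2] with n hn
    have hlogpos : 0 < Real.log n := by
      apply Real.log_pos
      exact_mod_cast hn
    rw [le_div_iff₀ hlogpos, one_mul, hT]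
    calc Real.log n ≤ Real.log ((n : ℝ) + 1) := by
          apply Real.log_le_log (by positivity)
          linarith
      _ = Real.log ((n + 1 : ℕ) : ℝ) := by push_cast; ring_nf
      _ ≤ ((harmonic n : ℚ) : ℝ) := log_add_one_le_harmonic n
  · filter_upwards [eventually_ge_atTop 2] with n hn
    have hlogpos : 0 < Real.log n := by
      apply Real.log_pos
      exact_mod_cast hn
    rw [div_le_iff₀ hlogpos, hT]
    have := harmonic_le_one_add_log n
    have hexp : ((Real.log ↑n)⁻¹ + 1) * Real.log ↑n = 1 + Real.log n := by
      field_simp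
    rw [hexp]
    exact this

lemma cesaro_log {c : ℕ → ℝ} {L : ℝ}
    (h : Tendsto (fun i : ℕ => (i : ℝ) * c i) atTop (𝓝 L)) :
    Tendsto (fun n : ℕ => (∑ i ∈ Finset.Icc 1 n, c i) / Real.log n) atTop (𝓝 L) := by
  set g : ℕ → ℝ := fun i => ((i : ℝ) + 1)⁻¹ with hg
  set T : ℕ → ℝ := fun n => ∑ i ∈ Finset.range n, g i with hTdef
  set S : ℕ → ℝ := fun n => ∑ i ∈ Finset.Icc 1 n, c i with hSdef
  have hrange : ∀ n, ∑ i ∈ Finset.range n, c (i + 1) = S n := by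
    intro n
    show ∑ i ∈ Finset.range n, c (i + 1) = ∑ i ∈ Finset.Icc 1 n, c i
    rw [← Finset.Ico_add_one_right_eq_Icc, Finset.sum_Ico_eq_sum_range]
    exact Finset.sum_congr rfl fun i _ => by rw [add_comm]
  have hTtop : Tendsto T atTop atTop := by
    refine Real.tendsto_sum_range_one_div_nat_succ_atTop.congr fun n => ?_
    exact Finset.sum_congr rfl fun i _ => by rw [one_div]
  have hf : (fun i => c (i + 1) - L * g i) =o[atTop] g := by
    rw [Asymptotics.isLittleO_iff]
    intro ε hε
    have h' : Tendsto (fun i : ℕ => ((i : ℝ) + 1) * c (i + 1)) atTop (𝓝 L) := by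
      have h2 := h.comp (tendsto_add_atTop_nat 1)
      refine h2.congr fun i => ?_
      simp only [Function.comp]
      push_cast
      ring
    have hev := Metric.tendsto_nhds.mp h' ε hε
    filter_upwards [hev] with i hi
    rw [Real.dist_eq] at hi
    have hpos : (0 : ℝ) < (i : ℝ) + 1 := by positivity
    have hrw : c (i + 1) - L * g i = (((i : ℝ) + 1) * c (i + 1) - L) * g i := by
      rw [hg]
      field_simp
    rw [Real.norm_eq_abs, Real.norm_eq_abs, hrw, abs_mul]
    have hgabs : |g i| = g i := abs_of_pos (by rw [hg]; positivity)
    rw [hgabs]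
    exact mul_le_mul_of_nonneg_right hi.le (by rw [hg]; positivity)
  have hgnn : 0 ≤ g := fun i => by rw [hg]; positivity
  have hsum := hf.sum_range hgnn hTtop
  have hdiff : ∀ n, ∑ i ∈ Finset.range n, (c (i + 1) - L * g i) = S n - L * T n := by
    intro n
    rw [Finset.sum_sub_distrib, hrange, ← Finset.mul_sum]
  have h0 : Tendsto (fun n => (S n - L * T n) / T n) atTop (𝓝 0) := by
    refine hsum.tendsto_div_nhds_zero.congr fun n => ?_
    rw [hdiff]
  have hTpos : ∀ᶠ n in atTop, 0 < T n := hTtop.eventually_gt_atTop 0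
  have hST : Tendsto (fun n => S n / T n) atTop (𝓝 L) := by
    have h2 : Tendsto (fun n => (S n - L * T n) / T n + L) atTop (𝓝 (0 + L)) :=
      h0.add tendsto_const_nhds
    rw [zero_add] at h2
    refine Tendsto.congr' ?_ h2
    filter_upwards [hTpos] with n hn
    field_simp
    ring
  have hTlog : Tendsto (fun n => T n / Real.log n) atTop (𝓝 1) := tendsto_harmonic_div_log
  have h3 := hST.mul hTlog
  rw [mul_one] at h3
  refine Tendsto.congr' ?_ h3
  filter_upwards [hTpos] with n hn
  rw [div_mul_div_cancel₀ hn.ne']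

section Env

variable {B : ℝ} {i0 : ℕ}

lemma pB_good (hB0 : 0 ≤ B) (hB1 : B < 1) : GoodEnv (pB B i0) := by
  intro i hi
  unfold pB
  split_ifs with h
  · norm_num
  · have hi1 : (1 : ℝ) ≤ (i : ℝ) := by exact_mod_cast hi
    have h4 : (0 : ℝ) < 4 * i := by positivity
    have hlt : B / (4 * i) < 1 / 2 := by
      rw [div_lt_iff₀ h4]
      nlinarith
    have hge : 0 ≤ B / (4 * i) := by positivity
    constructor <;> linarith

lemma mSeq_pB (hB0 : 0 ≤ B) (hB1 : B < 1) {i : ℕ} (hi : i0 < i) (hi1 : 1 ≤ i) :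
    mSeq (pB B i0) i = (2 * i + B) / (2 * i - B) := by
  have hii : ¬ i ≤ i0 := by omega
  have hi1' : (1 : ℝ) ≤ (i : ℝ) := by exact_mod_cast hi1
  rw [mSeq, pB, if_neg hii]
  have h4 : (0 : ℝ) < 4 * i := by positivity
  have hd1 : (0 : ℝ) < 1 / 2 - B / (4 * i) := by
    rw [sub_pos, div_lt_iff₀ h4]
    nlinarith
  have hd2 : (0 : ℝ) < 2 * i - B := by nlinarith
  rw [div_eq_div_iff hd1.ne' hd2.ne']
  field_simp
  ring

lemma mSeq_ge_one {p : ℕ → ℝ} (hp : GoodEnv p) {i : ℕ} (hi : 1 ≤ i) : 1 ≤ mSeq p i := by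
  obtain ⟨h0, h1⟩ := hp i hi
  rw [mSeq, le_div_iff₀ h0]
  linarith

lemma uSeq_ge {p : ℕ → ℝ} (hp : GoodEnv p) : ∀ n : ℕ, (n : ℝ) + 1 ≤ uSeq p n := by
  intro n
  induction n with
  | zero => norm_num [uSeq]
  | succ n ih =>
    have hm := mSeq_ge_one hp (show 1 ≤ n + 1 by omega)
    have hpos : (0 : ℝ) ≤ (n : ℝ) + 1 := by positivity
    rw [uSeq]
    push_cast
    nlinarith

def PiProd (B : ℝ) (i0 n : ℕ) : ℝ := ∏ i ∈ Finset.Icc (i0 + 1) n, mSeq (pB B i0) i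

lemma PiProd_ge_one (hB0 : 0 ≤ B) (hB1 : B < 1) (n : ℕ) : 1 ≤ PiProd B i0 n := by
  rw [PiProd]
  calc (1:ℝ) = ∏ _i ∈ Finset.Icc (i0 + 1) n, (1:ℝ) := by rw [Finset.prod_const_one]
    _ ≤ _ := by
        refine Finset.prod_le_prod (fun i _ => zero_le_one) ?_
        intro i hi
        have h1 := (Finset.mem_Icc.mp hi).1
        exact mSeq_ge_one (pB_good hB0 hB1) (by omega)

lemma uSeq_formula (hB0 : 0 ≤ B) (hB1 : B < 1) :
    ∀ n, i0 ≤ n → uSeq (pB B i0) n =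
      ((n : ℝ) + 1 - B / 2) / (1 - B) +
        (uSeq (pB B i0) i0 - ((i0 : ℝ) + 1 - B / 2) / (1 - B)) * PiProd B i0 n := by
  intro n hn
  induction n, hn using Nat.le_induction with
  | base =>
    have h1 : PiProd B i0 i0 = 1 := by
      rw [PiProd, Finset.Icc_eq_empty (by omega), Finset.prod_empty]
    rw [h1]
    ring
  | succ n hn ih =>
    have hm : mSeq (pB B i0) (n + 1) = (2 * ((n : ℝ) + 1) + B) / (2 * ((n : ℝ) + 1) - B) := by
      have := mSeq_pB (i0 := i0) hB0 hB1 (show i0 < n + 1 by omega) (by omega)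
      rw [this]
      push_cast
      ring_nf
    have hP : PiProd B i0 (n + 1) = PiProd B i0 n * mSeq (pB B i0) (n + 1) := by
      rw [PiProd, PiProd, Finset.prod_Icc_succ_top (by omega)]
    have hn1 : (1 : ℝ) ≤ (n : ℝ) + 1 := by
      have : (0:ℝ) ≤ (n:ℝ) := Nat.cast_nonneg n
      linarith
    have hd : (2 : ℝ) * ((n : ℝ) + 1) - B ≠ 0 := by nlinarith
    have h1B : (1 : ℝ) - B ≠ 0 := by linarith
    rw [uSeq, ih, hP, hm]
    push_cast
    field_simp
    ring

end Env

section Asymp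

variable {B : ℝ} {i0 : ℕ}

lemma PiProd_pos (hB0 : 0 ≤ B) (hB1 : B < 1) (n : ℕ) : 0 < PiProd B i0 n :=
  lt_of_lt_of_le one_pos (PiProd_ge_one hB0 hB1 n)

lemma PiProd_div_tendsto (hB0 : 0 ≤ B) (hB1 : B < 1) (hi0 : 0 < i0) :
    Tendsto (fun n : ℕ => PiProd B i0 n / (n : ℝ)) atTop (𝓝 0) := by
  set B' : ℝ := (1 + B) / 2 with hB'
  have hB'0 : 0 < B' := by rw [hB']; linarith
  have hB'1 : B' < 1 := by rw [hB']; linarith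
  have hBB' : B < B' := by rw [hB']; linarith
  set N : ℕ := i0 + 1 + ⌈B * B' / (1 - B)⌉₊ with hN
  have hN2 : 2 ≤ N := by omega
  have hNceil : (B * B' / (1 - B) : ℝ) ≤ (N : ℝ) := by
    calc (B * B' / (1 - B) : ℝ) ≤ (⌈B * B' / (1 - B)⌉₊ : ℝ) := Nat.le_ceil _
      _ ≤ (N : ℝ) := by
          have : (⌈B * B' / (1 - B)⌉₊ : ℕ) ≤ N := by omega
          exact_mod_cast this
  -- single-step log bound
  have hkey : ∀ n : ℕ, N ≤ n + 1 →
      Real.log (mSeq (pB B i0) (n + 1)) ≤ B' * (Real.log ((n : ℝ) + 1) - Real.log (n : ℝ)) := by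
    intro n hn
    have hn1 : 1 ≤ n := by omega
    have hn1' : (1 : ℝ) ≤ (n : ℝ) := by exact_mod_cast hn1
    have hi' : (N : ℝ) ≤ (n : ℝ) + 1 := by exact_mod_cast hn
    have hm : mSeq (pB B i0) (n + 1) = (2 * ((n : ℝ) + 1) + B) / (2 * ((n : ℝ) + 1) - B) := by
      have := mSeq_pB (i0 := i0) hB0 hB1 (show i0 < n + 1 by omega) (by omega)
      rw [this]; push_cast; ring_nf
    have hd : (0 : ℝ) < 2 * ((n : ℝ) + 1) - B := by nlinarith
    have hmpos : 0 < mSeq (pB B i0) (n + 1) := by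
      rw [hm]; positivity
    have h1 : Real.log (mSeq (pB B i0) (n + 1)) ≤ mSeq (pB B i0) (n + 1) - 1 :=
      Real.log_le_sub_one_of_pos hmpos
    have h2 : mSeq (pB B i0) (n + 1) - 1 = 2 * B / (2 * ((n : ℝ) + 1) - B) := by
      rw [hm]
      field_simp
      ring
    have h3 : 2 * B / (2 * ((n : ℝ) + 1) - B) ≤ B' / ((n : ℝ) + 1) := by
      rw [div_le_div_iff₀ hd (by positivity)]
      have hcross : B * B' ≤ ((n : ℝ) + 1) * (1 - B) := by
        calc B * B' = (B * B' / (1 - B)) * (1 - B) :=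
              (div_mul_cancel₀ (B * B') (by linarith : (1:ℝ) - B ≠ 0)).symm
          _ ≤ ((n : ℝ) + 1) * (1 - B) := by
              apply mul_le_mul_of_nonneg_right _ (by linarith)
              linarith [hNceil, hi']
      nlinarith [hcross]
    have h4 : 1 / ((n : ℝ) + 1) ≤ Real.log ((n : ℝ) + 1) - Real.log (n : ℝ) := by
      have hq : (0 : ℝ) < (n : ℝ) / ((n : ℝ) + 1) := by positivity
      have := Real.log_le_sub_one_of_pos hq
      rw [Real.log_div (by positivity) (by positivity)] at this
      have heq : (n : ℝ) / ((n : ℝ) + 1) - 1 = -(1 / ((n : ℝ) + 1)) := by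
        field_simp
        ring
      rw [heq] at this
      linarith
    have h5 : B' / ((n : ℝ) + 1) ≤ B' * (Real.log ((n : ℝ) + 1) - Real.log (n : ℝ)) := by
      rw [div_eq_mul_one_div]
      exact mul_le_mul_of_nonneg_left h4 hB'0.le
    linarith
  -- accumulated bound
  have hmain : ∀ n : ℕ, N ≤ n → Real.log (PiProd B i0 n) ≤
      Real.log (PiProd B i0 N) + B' * (Real.log (n : ℝ) - Real.log (N : ℝ)) := by
    intro n hn
    induction n, hn using Nat.le_induction with
    | base => simp
    | succ n hn ih =>
      have hP : PiProd B i0 (n + 1) = PiProd B i0 n * mSeq (pB B i0) (n + 1) := by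
        rw [PiProd, PiProd, Finset.prod_Icc_succ_top (by omega)]
      have hPpos : 0 < PiProd B i0 n := PiProd_pos hB0 hB1 n
      have hmpos : 0 < mSeq (pB B i0) (n + 1) :=
        lt_of_lt_of_le one_pos (mSeq_ge_one (pB_good hB0 hB1) (by omega))
      rw [hP, Real.log_mul hPpos.ne' hmpos.ne']
      have hk := hkey n (by omega)
      have hcast : ((n : ℝ) + 1) = ((n + 1 : ℕ) : ℝ) := by push_cast; ring
      rw [hcast] at hk
      have hsplit : B' * (Real.log ((n + 1 : ℕ) : ℝ) - Real.log (N : ℝ)) =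
          B' * (Real.log (n : ℝ) - Real.log (N : ℝ)) +
            B' * (Real.log ((n + 1 : ℕ) : ℝ) - Real.log (n : ℝ)) := by ring
      rw [hsplit]
      linarith
  set C : ℝ := Real.log (PiProd B i0 N) - B' * Real.log (N : ℝ) with hC
  have hbound : ∀ n : ℕ, N ≤ n →
      PiProd B i0 n / (n : ℝ) ≤ Real.exp (C + (B' - 1) * Real.log (n : ℝ)) := by
    intro n hn
    have hn1 : (1 : ℝ) ≤ (n : ℝ) := by
      have : 1 ≤ n := by omega
      exact_mod_cast this
    have hPpos : 0 < PiProd B i0 n := PiProd_pos hB0 hB1 n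
    have hq : PiProd B i0 n / (n : ℝ) =
        Real.exp (Real.log (PiProd B i0 n) - Real.log (n : ℝ)) := by
      rw [Real.exp_sub, Real.exp_log hPpos, Real.exp_log (by linarith)]
    rw [hq]
    apply Real.exp_le_exp.mpr
    have h1 := hmain n hn
    have h2 : B' * (Real.log (n : ℝ) - Real.log (N : ℝ)) =
        B' * Real.log (n : ℝ) - B' * Real.log (N : ℝ) := by ring
    have h3 : C + (B' - 1) * Real.log (n : ℝ) =
        (Real.log (PiProd B i0 N) - B' * Real.log (N : ℝ)) +
          (B' * Real.log (n : ℝ) - Real.log (n : ℝ)) := by rw [hC]; ring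
    rw [h3]
    linarith
  have hlim : Tendsto (fun n : ℕ => Real.exp (C + (B' - 1) * Real.log (n : ℝ)))
      atTop (𝓝 0) := by
    have h1 : Tendsto (fun n : ℕ => (B' - 1) * Real.log (n : ℝ)) atTop atBot :=
      (tendsto_const_mul_atBot_of_neg (by linarith : B' - 1 < 0)).mpr tendsto_log_natCast_atTop
    have h2 : Tendsto (fun n : ℕ => C + (B' - 1) * Real.log (n : ℝ)) atTop atBot :=
      tendsto_atBot_add_const_left _ C h1
    exact Real.tendsto_exp_atBot.comp h2
  refine tendsto_of_tendsto_of_tendsto_of_le_of_le' tendsto_const_nhds hlim ?_ ?_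
  · filter_upwards [eventually_ge_atTop 1] with n hn
    have h1 : (0:ℝ) < (n:ℝ) := by exact_mod_cast hn
    have := PiProd_pos (i0 := i0) hB0 hB1 n
    positivity
  · filter_upwards [eventually_ge_atTop N] with n hn
    exact hbound n hn

lemma uSeq_div_tendsto (hB0 : 0 ≤ B) (hB1 : B < 1) (hi0 : 0 < i0) :
    Tendsto (fun n : ℕ => uSeq (pB B i0) n / (n : ℝ)) atTop (𝓝 (1 / (1 - B))) := by
  set e : ℝ := uSeq (pB B i0) i0 - ((i0 : ℝ) + 1 - B / 2) / (1 - B) with he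
  have hg : Tendsto (fun n : ℕ =>
      (1 + (1 - B / 2) * ((n : ℝ))⁻¹) / (1 - B) + e * (PiProd B i0 n / (n : ℝ)))
      atTop (𝓝 (1 / (1 - B))) := by
    have h1 : Tendsto (fun n : ℕ => ((n : ℝ))⁻¹) atTop (𝓝 0) :=
      tendsto_inv_atTop_zero.comp tendsto_natCast_atTop_atTop
    have h2 : Tendsto (fun n : ℕ => 1 + (1 - B / 2) * ((n : ℝ))⁻¹) atTop (𝓝 1) := by
      have := (h1.const_mul (1 - B / 2)).const_add 1
      simpa using this
    have h3 : Tendsto (fun n : ℕ => (1 + (1 - B / 2) * ((n : ℝ))⁻¹) / (1 - B))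
        atTop (𝓝 (1 / (1 - B))) := h2.div_const _
    have h4 : Tendsto (fun n : ℕ => e * (PiProd B i0 n / (n : ℝ))) atTop (𝓝 0) := by
      have := (PiProd_div_tendsto hB0 hB1 hi0).const_mul e
      simpa using this
    have := h3.add h4
    simpa using this
  refine Tendsto.congr' ?_ hg
  filter_upwards [eventually_ge_atTop (max i0 1)] with n hn
  have hni0 : i0 ≤ n := le_trans (le_max_left _ _) hn
  have hn1 : 1 ≤ n := le_trans (le_max_right _ _) hn
  have hn0 : ((n : ℝ)) ≠ 0 := by
    have : (0:ℝ) < (n:ℝ) := by exact_mod_cast hn1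
    linarith
  rw [uSeq_formula hB0 hB1 n hni0]
  have h1 : (1 + (1 - B / 2) * ((n:ℝ))⁻¹) = ((n:ℝ) + 1 - B/2) / (n:ℝ) := by
    field_simp
    ring
  rw [h1, div_right_comm, ← mul_div_assoc, ← add_div]

end Asymp

section Final

variable {B : ℝ} {i0 : ℕ}

lemma nc_tendsto (hB0 : 0 ≤ B) (hB1 : B < 1) (hi0 : 0 < i0) (a : ℕ) :
    Tendsto (fun n : ℕ => (n : ℝ) *
      ((1 - thetaSeq (pB B i0) n) * thetaSeq (pB B i0) n ^ a)) atTop (𝓝 (1 - B)) := by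
  have hp : GoodEnv (pB B i0) := pB_good hB0 hB1
  have hu : ∀ n : ℕ, 0 < uSeq (pB B i0) n := fun n =>
    lt_of_lt_of_le (by positivity) (uSeq_ge hp n)
  have hone : ∀ n, 1 - thetaSeq (pB B i0) n = (uSeq (pB B i0) n)⁻¹ := fun n =>
    (inv_eq_of_mul_eq_one_right (uSeq_mul_one_sub_theta hp n)).symm
  have hutop : Tendsto (fun n => uSeq (pB B i0) n) atTop atTop := by
    apply tendsto_atTop_mono (uSeq_ge hp)
    exact tendsto_atTop_add_const_right _ 1 tendsto_natCast_atTop_atTop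
  have htheta1 : Tendsto (fun n => thetaSeq (pB B i0) n) atTop (𝓝 1) := by
    have h2 : Tendsto (fun n => (uSeq (pB B i0) n)⁻¹) atTop (𝓝 0) :=
      hutop.inv_tendsto_atTop
    have h3 : Tendsto (fun n => 1 - (uSeq (pB B i0) n)⁻¹) atTop (𝓝 (1 - 0)) :=
      tendsto_const_nhds.sub h2
    rw [sub_zero] at h3
    refine h3.congr fun n => ?_
    rw [← hone n]
    ring
  have hpow : Tendsto (fun n => thetaSeq (pB B i0) n ^ a) atTop (𝓝 1) := by
    simpa using htheta1.pow a
  have h1Bpos : (0:ℝ) < 1 - B := by linarith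
  have hnu : Tendsto (fun n : ℕ => (n : ℝ) * (1 - thetaSeq (pB B i0) n))
      atTop (𝓝 (1 - B)) := by
    have hne : (1:ℝ) / (1 - B) ≠ 0 := by positivity
    have hinv := (uSeq_div_tendsto hB0 hB1 hi0).inv₀ hne
    have heq : ((1:ℝ) / (1 - B))⁻¹ = 1 - B := by
      rw [one_div, inv_inv]
    rw [heq] at hinv
    refine hinv.congr fun n => ?_
    rw [inv_div, hone n, div_eq_mul_inv]
  have hm := hnu.mul hpow
  rw [mul_one] at hm
  refine hm.congr fun n => ?_
  ring

lemma integral_card {Ω : Type*} [MeasurableSpace Ω] (μ : Measure Ω) [IsProbabilityMeasure μ]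
    (Z : ℕ → Ω → ℕ) (hZm : ∀ n, Measurable (Z n)) (a n : ℕ) :
    ∫ ω, ((((Finset.Icc 1 n).filter fun i => Z i ω = a).card : ℝ)) ∂μ =
      ∑ i ∈ Finset.Icc 1 n, (μ {ω | Z i ω = a}).toReal := by
  have hmeas : ∀ i : ℕ, MeasurableSet {ω | Z i ω = a} := fun i =>
    (hZm i) (measurableSet_singleton a)
  have hrw : ∀ ω, ((((Finset.Icc 1 n).filter fun i => Z i ω = a).card : ℝ)) =
      ∑ i ∈ Finset.Icc 1 n, Set.indicator {ω' | Z i ω' = a} (fun _ => (1:ℝ)) ω := by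
    intro ω
    rw [Finset.card_filter]
    push_cast
    refine Finset.sum_congr rfl fun i _ => ?_
    rw [Set.indicator_apply]
    simp only [Set.mem_setOf_eq]
  calc ∫ ω, ((((Finset.Icc 1 n).filter fun i => Z i ω = a).card : ℝ)) ∂μ
      = ∫ ω, (∑ i ∈ Finset.Icc 1 n,
          Set.indicator {ω' | Z i ω' = a} (fun _ => (1:ℝ)) ω) ∂μ := by
        exact integral_congr_ae (Filter.Eventually.of_forall hrw)
    _ = ∑ i ∈ Finset.Icc 1 n,
          ∫ ω, Set.indicator {ω' | Z i ω' = a} (fun _ => (1:ℝ)) ω ∂μ :=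
        integral_finset_sum _ (fun i _ => (integrable_const (1:ℝ)).indicator (hmeas i))
    _ = ∑ i ∈ Finset.Icc 1 n, (μ {ω | Z i ω = a}).toReal := by
        refine Finset.sum_congr rfl fun i _ => ?_
        rw [integral_indicator_const (1:ℝ) (hmeas i), smul_eq_mul, mul_one]
        rfl

end Final

/-- If `0 ≤ B < 1`, then `E|C ∩ [1,n]| / ((1-B) log n) → 1`. -/
theorem stmt8 {Ω : Type*} [MeasurableSpace Ω] (P : Measure Ω) [IsProbabilityMeasure P]
    (B : ℝ) (hB0 : 0 ≤ B) (hB1 : B < 1) (i0 : ℕ) (hi0 : 0 < i0)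
    (hBi0 : B / (4 * i0) < 1 / 2)
    (Z : ℕ → Ω → ℕ) (hZ : IsBPVEI P (pB B i0) Z) (a : ℕ) :
    Tendsto (fun n : ℕ =>
        (∫ ω, ((((Finset.Icc 1 n).filter fun i => Z i ω = a).card : ℝ)) ∂P) /
          ((1 - B) * Real.log n)) atTop (nhds 1) := by
  have hp : GoodEnv (pB B i0) := pB_good hB0 hB1
  have hE : ∀ n : ℕ, (∫ ω, ((((Finset.Icc 1 n).filter fun i => Z i ω = a).card : ℝ)) ∂P)
      = ∑ i ∈ Finset.Icc 1 n, (1 - thetaSeq (pB B i0) i) * thetaSeq (pB B i0) i ^ a := by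
    intro n
    rw [integral_card P Z hZ.1 a n]
    exact Finset.sum_congr rfl fun i _ => marginal_eq P (pB B i0) Z hZ hp i a
  have hces := cesaro_log (nc_tendsto hB0 hB1 hi0 a)
  have h1B : (1:ℝ) - B ≠ 0 := by linarith
  have hfin := hces.div_const (1 - B)
  rw [div_self h1B] at hfin
  refine hfin.congr fun n => ?_
  rw [← hE n, div_div, mul_comm (Real.log (n:ℝ)) (1 - B)]
end
end

section
/- For every $n \ge 1$, $P(Z_n = a) = \dfrac{(D(n)-1)^{a}}{D(n)^{a+1}} = \Big(1 - \dfrac{1}{D(n)}\Big)^{a}\dfrac{1}{D(n)}$. -/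
open MeasureTheory Filter Finset

noncomputable section

/-! ### Auxiliary material -/

/-- Extend a tuple `u : Fin n → ℕ` by the value `z` at all indices `≥ n`. -/
def extPath (n : ℕ) (u : Fin n → ℕ) (z : ℕ) (i : ℕ) : ℕ :=
  if h : i < n then u ⟨i, h⟩ else z

lemma extPath_lt {n : ℕ} (u : Fin n → ℕ) (z : ℕ) {i : ℕ} (h : i < n) :
    extPath n u z i = u ⟨i, h⟩ := dif_pos h

lemma extPath_ge {n : ℕ} (u : Fin n → ℕ) (z : ℕ) {i : ℕ} (h : ¬ i < n) :
    extPath n u z i = z := dif_neg h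

/-- Splitting off the last coordinate. -/
def snocEquiv (n : ℕ) : ((Fin n → ℕ) × ℕ) ≃ (Fin (n + 1) → ℕ) where
  toFun vz := Fin.snoc vz.1 vz.2
  invFun u := (Fin.init u, u (Fin.last n))
  left_inv vz := by simp [Fin.init_snoc, Fin.snoc_last]
  right_inv u := by simp [Fin.snoc_init_self]

lemma extPath_snoc_agree (n : ℕ) (v : Fin n → ℕ) (z b : ℕ) {i : ℕ} (hi : i ≤ n) :
    extPath (n + 1) (Fin.snoc v z) b i = extPath n v z i := by
  rcases lt_or_eq_of_le hi with h | h
  · rw [extPath_lt _ _ (h.trans (Nat.lt_succ_self n)), extPath_lt _ _ h]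
    have : (⟨i, h.trans (Nat.lt_succ_self n)⟩ : Fin (n + 1)) = Fin.castSucc ⟨i, h⟩ := rfl
    rw [this, Fin.snoc_castSucc]
  · subst h
    rw [extPath_lt _ _ (Nat.lt_succ_self i), extPath_ge _ _ (lt_irrefl i)]
    have : (⟨i, Nat.lt_succ_self i⟩ : Fin (i + 1)) = Fin.last i := rfl
    rw [this, Fin.snoc_last]

lemma Dn_zero (m : ℕ → ℝ) : Dn m 0 = 1 := by
  simp [Dn, Dkn]

lemma Dn_succ (m : ℕ → ℝ) (n : ℕ) : Dn m (n + 1) = 1 + m (n + 1) * Dn m n := by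
  unfold Dn Dkn
  rw [Finset.sum_Icc_succ_top (Nat.le_add_left 1 n)]
  have h1 : ∀ j ∈ Finset.Icc 1 n, ∏ i ∈ Finset.Icc j (n + 1), m i
      = (∏ i ∈ Finset.Icc j n, m i) * m (n + 1) := by
    intro j hj
    rw [Finset.prod_Icc_succ_top]
    exact (Finset.mem_Icc.mp hj).2.trans (Nat.le_succ n)
  rw [Finset.sum_congr rfl h1, ← Finset.sum_mul]
  rw [Finset.Icc_self, Finset.prod_singleton]
  ring

/-! ### Main theorem -/

/-- Distribution of the population size:
`P(Z_n = a) = (D(n)-1)^a / D(n)^{a+1} = (1 - 1/D(n))^a (1/D(n))`. -/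
theorem stmt11 {Ω : Type*} [MeasurableSpace Ω] (P : Measure Ω) [IsProbabilityMeasure P]
    (p : ℕ → ℝ) (hp : ∀ k, 1 ≤ k → 0 < p k ∧ p k ≤ 1 / 2)
    (Z : ℕ → Ω → ℕ) (hZ : IsBPVEI P p Z) (a : ℕ) (n : ℕ) (hn : 1 ≤ n) :
    (P {ω | Z n ω = a}).toReal = (Dn (mSeq p) n - 1) ^ a / (Dn (mSeq p) n) ^ (a + 1) ∧
    (P {ω | Z n ω = a}).toReal = (1 - 1 / Dn (mSeq p) n) ^ a * (1 / Dn (mSeq p) n) := by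
  -- nonnegativity of transition probabilities
  have htnn : ∀ i z j, 1 ≤ i → 0 ≤ transProb p i z j := by
    intro i z j hi
    obtain ⟨h1, h2⟩ := hp i hi
    have : 0 ≤ 1 - p i := by linarith
    unfold transProb
    positivity
  -- nonnegativity of the path weights
  have hWnn : ∀ (n : ℕ) (c : ℕ → ℕ), 0 ≤ (if c 0 = 0 then (1:ℝ) else 0) *
      ∏ i ∈ Finset.Icc 1 n, transProb p i (c (i - 1)) (c i) := by
    intro n c
    apply mul_nonneg
    · split <;> norm_num
    · exact Finset.prod_nonneg fun i hi => htnn i _ _ (Finset.mem_Icc.mp hi).1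
  -- cylinder sets are measurable
  have MB : ∀ (n : ℕ) (c : ℕ → ℕ), MeasurableSet {ω | ∀ i ≤ n, Z i ω = c i} := by
    intro n c
    have : {ω | ∀ i ≤ n, Z i ω = c i} = ⋂ i, ⋂ (_ : i ≤ n), (Z i) ⁻¹' {c i} := by
      ext ω; simp [Set.mem_iInter]
    rw [this]
    exact MeasurableSet.iInter fun i => MeasurableSet.iInter fun _ =>
      (hZ.1 i) (measurableSet_singleton _)
  -- measures of cylinder sets
  have hB : ∀ (n : ℕ) (c : ℕ → ℕ), P {ω | ∀ i ≤ n, Z i ω = c i} =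
      ENNReal.ofReal ((if c 0 = 0 then (1:ℝ) else 0) *
        ∏ i ∈ Finset.Icc 1 n, transProb p i (c (i - 1)) (c i)) := by
    intro n c
    rw [← hZ.2 n c, ENNReal.ofReal_toReal (measure_ne_top P _)]
  -- decomposition of the marginal event into cylinder events
  have hdecomp : ∀ (n : ℕ) (z : ℕ), P {ω | Z n ω = z} =
      ∑' u : Fin n → ℕ, P {ω | ∀ i ≤ n, Z i ω = extPath n u z i} := by
    intro n z
    rw [← measure_iUnion ?_ (fun u => MB n _)]
    · congr 1
      ext ω
      simp only [Set.mem_iUnion, Set.mem_setOf_eq]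
      constructor
      · intro h
        refine ⟨fun i => Z i ω, fun i hi => ?_⟩
        rcases lt_or_eq_of_le hi with h' | h'
        · rw [extPath_lt _ _ h']
        · subst h'
          rw [extPath_ge _ _ (lt_irrefl i), h]
      · intro ⟨u, hu⟩
        have := hu n le_rfl
        rwa [extPath_ge _ _ (lt_irrefl n)] at this
    · intro u v huv
      rw [Function.onFun, Set.disjoint_left]
      intro ω hu hv
      apply huv
      funext i
      have h1 := hu i.val (le_of_lt i.isLt)
      have h2 := hv i.val (le_of_lt i.isLt)
      rw [extPath_lt _ _ i.isLt] at h1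
      rw [extPath_lt _ _ i.isLt] at h2
      simpa using h1.symm.trans h2
  -- one-step recursion for the marginals
  have hrec : ∀ (n : ℕ) (b : ℕ), P {ω | Z (n + 1) ω = b} =
      ∑' z : ℕ, P {ω | Z n ω = z} * ENNReal.ofReal (transProb p (n + 1) z b) := by
    intro n b
    rw [hdecomp (n + 1) b,
        ← Equiv.tsum_eq (snocEquiv n)
          (fun u => P {ω | ∀ i ≤ n + 1, Z i ω = extPath (n + 1) u b i})]
    have hpt : ∀ (v : Fin n → ℕ) (z : ℕ),
        P {ω | ∀ i ≤ n + 1, Z i ω = extPath (n + 1) (Fin.snoc v z) b i} =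
        P {ω | ∀ i ≤ n, Z i ω = extPath n v z i} * ENNReal.ofReal (transProb p (n + 1) z b) := by
      intro v z
      rw [hB (n + 1) _, hB n _]
      have h0 : extPath (n + 1) (Fin.snoc v z) b 0 = extPath n v z 0 :=
        extPath_snoc_agree n v z b (Nat.zero_le n)
      have hprod : ∏ i ∈ Finset.Icc 1 (n + 1),
          transProb p i (extPath (n + 1) (Fin.snoc v z) b (i - 1))
            (extPath (n + 1) (Fin.snoc v z) b i)
          = (∏ i ∈ Finset.Icc 1 n, transProb p i (extPath n v z (i - 1)) (extPath n v z i)) *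
            transProb p (n + 1) z b := by
        rw [Finset.prod_Icc_succ_top (Nat.le_add_left 1 n)]
        congr 1
        · apply Finset.prod_congr rfl
          intro i hi
          obtain ⟨hi1, hi2⟩ := Finset.mem_Icc.mp hi
          rw [extPath_snoc_agree n v z b (le_trans (Nat.sub_le i 1) hi2),
              extPath_snoc_agree n v z b hi2]
        · rw [show n + 1 - 1 = n from rfl,
              extPath_snoc_agree n v z b le_rfl,
              extPath_ge _ _ (lt_irrefl (n + 1)) ]
          rw [extPath_ge _ _ (lt_irrefl n)]
      rw [h0, hprod, ← mul_assoc, ENNReal.ofReal_mul (hWnn n _)]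
    calc ∑' (vz : (Fin n → ℕ) × ℕ),
          P {ω | ∀ i ≤ n + 1, Z i ω = extPath (n + 1) (snocEquiv n vz) b i}
        = ∑' (vz : (Fin n → ℕ) × ℕ), P {ω | ∀ i ≤ n, Z i ω = extPath n vz.1 vz.2 i} *
            ENNReal.ofReal (transProb p (n + 1) vz.2 b) := by
          apply tsum_congr; intro vz; exact hpt vz.1 vz.2
      _ = ∑' (v : Fin n → ℕ), ∑' (z : ℕ), P {ω | ∀ i ≤ n, Z i ω = extPath n v z i} *
            ENNReal.ofReal (transProb p (n + 1) z b) := ENNReal.tsum_prod'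
      _ = ∑' (z : ℕ), ∑' (v : Fin n → ℕ), P {ω | ∀ i ≤ n, Z i ω = extPath n v z i} *
            ENNReal.ofReal (transProb p (n + 1) z b) := ENNReal.tsum_comm
      _ = ∑' (z : ℕ), P {ω | Z n ω = z} * ENNReal.ofReal (transProb p (n + 1) z b) := by
          apply tsum_congr; intro z
          rw [ENNReal.tsum_mul_right, ← hdecomp n z]
  -- D is at least 1
  have hD : ∀ n, 1 ≤ Dn (mSeq p) n := by
    intro n
    induction n with
    | zero => rw [Dn_zero]
    | succ n ih =>
      rw [Dn_succ]
      obtain ⟨h1, h2⟩ := hp (n + 1) (Nat.le_add_left 1 n)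
      have hm : 0 ≤ mSeq p (n + 1) := div_nonneg (by linarith) h1.le
      nlinarith
  -- the key induction
  have key : ∀ (n : ℕ) (b : ℕ), P {ω | Z n ω = b} =
      ENNReal.ofReal ((1 - 1 / Dn (mSeq p) n) ^ b * (1 / Dn (mSeq p) n)) := by
    intro n
    induction n with
    | zero =>
      intro b
      rw [hdecomp 0 b,
          tsum_eq_single (default : Fin 0 → ℕ) (fun v hv => absurd (Subsingleton.elim v default) hv),
          hB 0]
      rw [Dn_zero]
      have : Finset.Icc 1 0 = (∅ : Finset ℕ) := by decide
      rw [this, Finset.prod_empty, extPath_ge _ _ (lt_irrefl 0)]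
      cases b with
      | zero => norm_num
      | succ b => norm_num
    | succ n ih =>
      intro b
      have hd := hD n
      have hd0 : (0:ℝ) < Dn (mSeq p) n := lt_of_lt_of_le one_pos hd
      obtain ⟨hp1, hp2⟩ := hp (n + 1) (Nat.le_add_left 1 n)
      set d : ℝ := Dn (mSeq p) n with hdd
      set p' : ℝ := p (n + 1) with hpp'
      have hq1 : (0:ℝ) < 1 - p' := by rw [hpp']; linarith
      set r : ℝ := (1 - 1 / d) * p' with hrr
      have hs0 : (0:ℝ) ≤ 1 - 1 / d := by
        have : 1 / d ≤ 1 := by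
          rw [div_le_one hd0]; exact hd
        linarith
      have hs1 : 1 - 1 / d ≤ 1 := by
        have : 0 < 1 / d := by positivity
        linarith
      have hr0 : 0 ≤ r := mul_nonneg hs0 hp1.le
      have hr1 : r < 1 := by
        have : r ≤ p' := by
          calc r ≤ 1 * p' := mul_le_mul_of_nonneg_right hs1 hp1.le
          _ = p' := one_mul p'
        linarith
      have hrnorm : ‖r‖ < 1 := by rwa [Real.norm_eq_abs, abs_of_nonneg hr0]
      -- the real summand
      have hsummand : ∀ z : ℕ, (1 - 1 / d) ^ z * (1 / d) * transProb p (n + 1) z b =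
          ((z + b).choose b : ℝ) * r ^ z * ((1 / d) * p' * (1 - p') ^ b) := by
        intro z
        unfold transProb
        rw [hrr, mul_pow, ← hpp']
        ring
      have hsummable : Summable (fun z : ℕ =>
          (1 - 1 / d) ^ z * (1 / d) * transProb p (n + 1) z b) := by
        apply Summable.congr
          ((summable_choose_mul_geometric_of_norm_lt_one b hrnorm).mul_right
            ((1 / d) * p' * (1 - p') ^ b))
        intro z
        exact (hsummand z).symm
      have hnn : ∀ z : ℕ, 0 ≤ (1 - 1 / d) ^ z * (1 / d) * transProb p (n + 1) z b := by
        intro z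
        apply mul_nonneg (mul_nonneg (pow_nonneg hs0 z) (by positivity))
        exact htnn (n + 1) z b (Nat.le_add_left 1 n)
      -- compute
      rw [hrec n b]
      have h1 : (∑' z : ℕ, P {ω | Z n ω = z} * ENNReal.ofReal (transProb p (n + 1) z b)) =
          ENNReal.ofReal (∑' z : ℕ, (1 - 1 / d) ^ z * (1 / d) * transProb p (n + 1) z b) := by
        rw [ENNReal.ofReal_tsum_of_nonneg hnn hsummable]
        apply tsum_congr
        intro z
        rw [ih z, ← ENNReal.ofReal_mul (mul_nonneg (pow_nonneg hs0 z) (by positivity))]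
      rw [h1]
      congr 1
      -- the real computation
      have htsum : (∑' z : ℕ, (1 - 1 / d) ^ z * (1 / d) * transProb p (n + 1) z b) =
          (1 / (1 - r) ^ (b + 1)) * ((1 / d) * p' * (1 - p') ^ b) := by
        rw [tsum_congr hsummand, tsum_mul_right,
          tsum_choose_mul_geometric_of_norm_lt_one b hrnorm]
      rw [htsum]
      -- algebra
      have hdsucc : Dn (mSeq p) (n + 1) = 1 + ((1 - p') / p') * d := by
        rw [Dn_succ]; rfl
      set e : ℝ := p' + (1 - p') * d with hee
      have he0 : (0:ℝ) < e := by positivity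
      have h1r : 1 - r = e / d := by
        rw [hrr, hee]; field_simp; try ring
      have hd'e : Dn (mSeq p) (n + 1) = e / p' := by
        rw [hdsucc, hee]; field_simp; try ring
      rw [h1r, hd'e]
      rw [div_pow, one_div_div, one_div_div]
      have h1t : 1 - p' / e = ((1 - p') * d) / e := by
        field_simp
        rw [hee]; ring
      rw [h1t, div_pow, mul_pow]
      field_simp
      try ring
  -- conclude
  have hfinal := key n a
  have hx : (0:ℝ) ≤ (1 - 1 / Dn (mSeq p) n) ^ a * (1 / Dn (mSeq p) n) := by
    have hd := hD n
    have hd0 : (0:ℝ) < Dn (mSeq p) n := lt_of_lt_of_le one_pos hd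
    have : 1 / Dn (mSeq p) n ≤ 1 := by rw [div_le_one hd0]; exact hd
    have h0 : (0:ℝ) ≤ 1 - 1 / Dn (mSeq p) n := by linarith
    positivity
  have h2 : (P {ω | Z n ω = a}).toReal =
      (1 - 1 / Dn (mSeq p) n) ^ a * (1 / Dn (mSeq p) n) := by
    rw [hfinal, ENNReal.toReal_ofReal hx]
  refine ⟨?_, h2⟩
  rw [h2]
  have hd0 : (0:ℝ) < Dn (mSeq p) n := lt_of_lt_of_le one_pos (hD n)
  have h3 : 1 - 1 / Dn (mSeq p) n = (Dn (mSeq p) n - 1) / Dn (mSeq p) n := by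
    field_simp
  rw [h3, div_pow, pow_succ]
  try field_simp
  try ring
end
end

section
/- For all integers $2 \le k \le n$: $\dfrac{D(k,n)}{D(n)} = 1 - \prod_{j=k-1}^{n}\Big(1 - \dfrac{1}{D(j)}\Big)$. -/
open Filter Finset

noncomputable section

lemma Dkn_pos (m : ℕ → ℝ) (hm : ∀ j, 1 ≤ j → 1 ≤ m j) (k n : ℕ) (hk : 1 ≤ k) :
    0 < Dkn m k n := by
  have h : 0 ≤ ∑ j ∈ Finset.Icc k n, ∏ i ∈ Finset.Icc j n, m i := by
    apply Finset.sum_nonneg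
    intro j hj
    apply Finset.prod_nonneg
    intro i hi
    have h1 : 1 ≤ i :=
      le_trans (le_trans hk (Finset.mem_Icc.mp hj).1) (Finset.mem_Icc.mp hi).1
    linarith [hm i h1]
  unfold Dkn; linarith

lemma Dn_pos (m : ℕ → ℝ) (hm : ∀ j, 1 ≤ j → 1 ≤ m j) (n : ℕ) : 0 < Dn m n :=
  Dkn_pos m hm 1 n le_rfl

lemma Dkn_succ (m : ℕ → ℝ) (k n : ℕ) (h : k ≤ n + 1) :
    Dkn m k (n + 1) = 1 + m (n + 1) * Dkn m k n := by
  unfold Dkn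
  rw [Finset.sum_Icc_succ_top h, Finset.Icc_self, Finset.prod_singleton]
  have hc : ∀ j ∈ Finset.Icc k n, (∏ i ∈ Finset.Icc j (n + 1), m i)
      = (∏ i ∈ Finset.Icc j n, m i) * m (n + 1) := by
    intro j hj
    exact Finset.prod_Icc_succ_top (le_trans (Finset.mem_Icc.mp hj).2 (Nat.le_succ n)) m
  rw [Finset.sum_congr rfl hc, ← Finset.sum_mul]
  ring

lemma Dn_split (m : ℕ → ℝ) (c n : ℕ) (hcn : c + 1 ≤ n) :
    Dn m n = Dkn m (c + 2) n + Dkn m 1 c * ∏ j ∈ Finset.Icc (c + 1) n, m j := by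
  unfold Dn Dkn
  have hset : Finset.Icc 1 n = Finset.Icc 1 (c + 1) ∪ Finset.Icc (c + 2) n := by
    ext x; simp only [Finset.mem_Icc, Finset.mem_union]; omega
  have hdisj : Disjoint (Finset.Icc 1 (c + 1)) (Finset.Icc (c + 2) n) := by
    simp only [Finset.disjoint_left, Finset.mem_Icc]; omega
  rw [hset, Finset.sum_union hdisj]
  have h2 : ∀ j ∈ Finset.Icc 1 (c + 1), (∏ i ∈ Finset.Icc j n, m i)
      = (∏ i ∈ Finset.Icc j c, m i) * ∏ i ∈ Finset.Icc (c + 1) n, m i := by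
    intro j hj
    obtain ⟨hj1, hj2⟩ := Finset.mem_Icc.mp hj
    have hset2 : Finset.Icc j n = Finset.Icc j c ∪ Finset.Icc (c + 1) n := by
      ext x; simp only [Finset.mem_Icc, Finset.mem_union]; omega
    have hdisj2 : Disjoint (Finset.Icc j c) (Finset.Icc (c + 1) n) := by
      simp only [Finset.disjoint_left, Finset.mem_Icc]; omega
    rw [hset2, Finset.prod_union hdisj2]
  rw [Finset.sum_congr rfl h2, ← Finset.sum_mul]
  have h3 : ∑ j ∈ Finset.Icc 1 (c + 1), ∏ i ∈ Finset.Icc j c, m i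
      = 1 + ∑ j ∈ Finset.Icc 1 c, ∏ i ∈ Finset.Icc j c, m i := by
    rw [Finset.sum_Icc_succ_top (by omega)]
    rw [Finset.Icc_eq_empty_of_lt (Nat.lt_succ_self c), Finset.prod_empty]
    ring
  rw [h3]
  ring

lemma prod_telescope (m : ℕ → ℝ) (hm : ∀ j, 1 ≤ j → 1 ≤ m j) (c : ℕ) :
    ∀ n, c + 1 ≤ n → ∏ j ∈ Finset.Icc (c + 1) n, (1 - 1 / Dn m j)
      = (∏ j ∈ Finset.Icc (c + 1) n, m j) * Dn m c / Dn m n := by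
  refine Nat.le_induction ?_ ?_
  · rw [Finset.Icc_self, Finset.prod_singleton, Finset.prod_singleton]
    have hrec : Dn m (c + 1) = 1 + m (c + 1) * Dn m c := Dkn_succ m 1 c (by omega)
    have h1 := (Dn_pos m hm (c + 1)).ne'
    field_simp
    linarith [hrec]
  · intro n hn ih
    rw [Finset.prod_Icc_succ_top (by omega), Finset.prod_Icc_succ_top (by omega), ih]
    have hrec : Dn m (n + 1) = 1 + m (n + 1) * Dn m n := Dkn_succ m 1 n (by omega)
    have h1 := (Dn_pos m hm (n + 1)).ne'
    have h2 := (Dn_pos m hm n).ne'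
    rw [hrec] at h1 ⊢
    field_simp
    linear_combination (norm := ring_nf) (-(∏ x ∈ Icc (c + 1) n, m x) * Dn m c) * mul_inv_cancel₀ h1

/-- For `2 ≤ k ≤ n`: `D(k,n)/D(n) = 1 - ∏_{j=k-1}^n (1 - 1/D(j))`. -/
theorem stmt13 (m : ℕ → ℝ) (hm : ∀ j, 1 ≤ j → 1 ≤ m j)
    (k n : ℕ) (hk : 2 ≤ k) (hkn : k ≤ n) :
    Dkn m k n / Dn m n = 1 - ∏ j ∈ Finset.Icc (k - 1) n, (1 - 1 / Dn m j) := by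
  obtain ⟨c, rfl⟩ : ∃ c, k = c + 2 := ⟨k - 2, by omega⟩
  have hcn : c + 1 ≤ n := by omega
  have hk1 : c + 2 - 1 = c + 1 := by omega
  rw [hk1, prod_telescope m hm c n hcn]
  have hsplit := Dn_split m c n hcn
  have h1 := (Dn_pos m hm n).ne'
  have hDc : Dn m c = Dkn m 1 c := rfl
  rw [hDc]
  rw [show Dkn m (c + 2) n
      = Dn m n - Dkn m 1 c * ∏ j ∈ Finset.Icc (c + 1) n, m j by linarith]
  field_simp
end
end
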